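/- Let p ∈ ℝ² with ‖p‖ > r > 0 and v ∈ ℝ² with v ≠ 0. If h(p,v) := ⟨p, v⟩ + ‖v‖·√(‖p‖² − r²) < 0, then there exists t > 0 such that ‖p + t v‖ < r. -/

import Mathlib

/-!
Along the ray `t ↦ p + t • v` the squared distance to the origin is minimal at
`t₀ = -⟪p, v⟫ / ‖v‖²`, where it equals `‖p‖² - ⟪p, v⟫² / ‖v‖²`. The hypothesis `h < 0` forces
`⟪p, v⟫ < 0`, so `t₀ > 0`, and squaring `-⟪p, v⟫ > ‖v‖ √(‖p‖² - r²) ≥ 0` gives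
`⟪p, v⟫² > ‖v‖² (‖p‖² - r²)` (as `x ≤ √x ²` also for `x < 0`), i.e. the minimal distance is below `r`.
-/

open scoped RealInnerProductSpace

section CollisionCone

variable {E : Type*} [NormedAddCommGroup E] [InnerProductSpace ℝ E]

theorem norm_add_smul_sq (p v : E) (t : ℝ) :
    ‖p + t • v‖ ^ 2 = ‖p‖ ^ 2 + 2 * t * ⟪p, v⟫ + t ^ 2 * ‖v‖ ^ 2 := by
  rw [norm_add_sq_real, real_inner_smul_right, norm_smul, mul_pow, Real.norm_eq_abs, sq_abs]
  ring

theorem norm_add_neg_inner_div_smul_sq {v : E} (hv : v ≠ 0) (p : E) :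
    ‖p + (-⟪p, v⟫ / ‖v‖ ^ 2) • v‖ ^ 2 = ‖p‖ ^ 2 - ⟪p, v⟫ ^ 2 / ‖v‖ ^ 2 := by
  have : ‖v‖ ≠ 0 := norm_ne_zero_iff.mpr hv
  rw [norm_add_smul_sq]
  field_simp
  ring

theorem inner_neg_of_collision_cone {p v : E} {r : ℝ}
    (hcone : ⟪p, v⟫ + ‖v‖ * √(‖p‖ ^ 2 - r ^ 2) < 0) : ⟪p, v⟫ < 0 := by
  have : 0 ≤ ‖v‖ * √(‖p‖ ^ 2 - r ^ 2) := by positivity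
  linarith

theorem sq_norm_mul_lt_sq_inner_of_collision_cone {p v : E} {r : ℝ}
    (hcone : ⟪p, v⟫ + ‖v‖ * √(‖p‖ ^ 2 - r ^ 2) < 0) :
    ‖v‖ ^ 2 * (‖p‖ ^ 2 - r ^ 2) < ⟪p, v⟫ ^ 2 := by
  have hsqrt : ‖p‖ ^ 2 - r ^ 2 ≤ √(‖p‖ ^ 2 - r ^ 2) ^ 2 := by
    rw [Real.sq_sqrt']
    exact le_max_left _ _
  have hlt : (‖v‖ * √(‖p‖ ^ 2 - r ^ 2)) ^ 2 < (-⟪p, v⟫) ^ 2 :=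
    pow_lt_pow_left₀ (by linarith) (by positivity) two_ne_zero
  calc ‖v‖ ^ 2 * (‖p‖ ^ 2 - r ^ 2)
      ≤ (‖v‖ * √(‖p‖ ^ 2 - r ^ 2)) ^ 2 := by
        rw [mul_pow]
        exact mul_le_mul_of_nonneg_left hsqrt (by positivity)
    _ < ⟪p, v⟫ ^ 2 := by rwa [neg_sq] at hlt

end CollisionCone

theorem stmt_2_general (p v : EuclideanSpace ℝ (Fin 2)) (r : ℝ) (hr : 0 < r)
    (hcone : ⟪p, v⟫ + ‖v‖ * Real.sqrt (‖p‖ ^ 2 - r ^ 2) < 0) :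
    ∃ t : ℝ, 0 < t ∧ ‖p + t • v‖ < r := by
  have hinner := inner_neg_of_collision_cone hcone
  have hv : v ≠ 0 := by
    rintro rfl
    simp at hinner
  have hvpos : 0 < ‖v‖ ^ 2 := by positivity
  refine ⟨-⟪p, v⟫ / ‖v‖ ^ 2, div_pos (neg_pos.mpr hinner) hvpos, ?_⟩
  have hgap : ‖p‖ ^ 2 - r ^ 2 < ⟪p, v⟫ ^ 2 / ‖v‖ ^ 2 := by
    rw [lt_div_iff₀ hvpos, mul_comm]
    exact sq_norm_mul_lt_sq_inner_of_collision_cone hcone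
  refine lt_of_pow_lt_pow_left₀ 2 hr.le ?_
  rw [norm_add_neg_inner_div_smul_sq hv]
  linarith

/-- If the relative velocity points strictly into the collision cone (h < 0),
then the obstacle eventually enters the open disk of radius r. -/
theorem stmt_2 (p v : EuclideanSpace ℝ (Fin 2)) (r : ℝ) (hr : 0 < r)
    (hpr : r < ‖p‖) (hv : v ≠ 0)
    (hcone : ⟪p, v⟫ + ‖v‖ * Real.sqrt (‖p‖ ^ 2 - r ^ 2) < 0) :
    ∃ t : ℝ, 0 < t ∧ ‖p + t • v‖ < r :=
  stmt_2_general p v r hr hcone
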